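/- arXiv:0802.4223 — 6 statements merged into one kernel-verified Lean document; each statement's English description precedes it below -/
import Mathlib

section
/- Let ω ∈ (0,1) be irrational, q = exp(2πiω), α ∈ (0,1], λ = exp(2πiα), and assume λ ∉ q^ℤ. Suppose the power series Σ_{n≥0} x^n/(q;q)_n and Σ_{n≥0} x^n/(1 − q^n λ) have positive radii of convergence R(ω) and r(α) respectively. Then the radius of convergence of φ_{(q;λ)}(x) = Σ_{n≥0} x^n/(λ;q)_n is at least R(ω)·min(1, r(α)). -/
open scoped BigOperators

/-- The q-Pochhammer symbol `(lam; q)_n = (1 - lam)(1 - q lam) ⋯ (1 - q^{n-1} lam)`. -/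
noncomputable def qPoch (q lam : ℂ) (n : ℕ) : ℂ :=
  ∏ k ∈ Finset.range n, (1 - q ^ k * lam)

/-- The radius of convergence of the power series `∑ c n * x ^ n`. -/
noncomputable def radiusOfConv (c : ℕ → ℂ) : ENNReal :=
  ⨆ (r : NNReal) (C : ℝ) (_ : ∀ n : ℕ, ‖c n‖ * (r : ℝ) ^ n ≤ C), (r : ENNReal)

/-!
Lagrange interpolation of `1` at the nodes `q⁻ᵏ` (distinct since `q` is not a root of unity)
gives the partial fraction expansion
`1 / (λ;q)_{n+1} = ∑_{i+j=n} 1 / ((q⁻¹;q⁻¹)_i (1 - qⁱλ) (q;q)_j)`,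
and `|(q⁻¹;q⁻¹)_i| = |(q;q)_i|` because `|q| = 1`. So, up to a shift, the coefficients of `φ` are
the Cauchy product of a sequence of radius at least `R(ω) r(α)` (a termwise product) with one of
radius `R(ω)`, and a Cauchy product has radius at least `min (R(ω) r(α)) R(ω) = R(ω) min(1, r(α))`.
-/

open Finset

section radiusOfConv

variable {a b c : ℕ → ℂ}

lemma le_radiusOfConv {ρ : NNReal} {C : ℝ} (h : ∀ n, ‖c n‖ * (ρ : ℝ) ^ n ≤ C) :
    (ρ : ENNReal) ≤ radiusOfConv c :=
  le_iSup_of_le ρ <| le_iSup_of_le C <| le_iSup_of_le h le_rfl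

lemma exists_norm_mul_pow_le_of_lt_radiusOfConv {ρ : NNReal}
    (h : (ρ : ENNReal) < radiusOfConv c) :
    ∃ C, 0 ≤ C ∧ ∀ n, ‖c n‖ * (ρ : ℝ) ^ n ≤ C := by
  simp only [radiusOfConv, lt_iSup_iff] at h
  obtain ⟨r, C, hC, hρr⟩ := h
  refine ⟨max C 0, le_max_right _ _, fun n => ?_⟩
  calc ‖c n‖ * (ρ : ℝ) ^ n ≤ ‖c n‖ * (r : ℝ) ^ n := by gcongr; exact_mod_cast hρr.le
    _ ≤ max C 0 := (hC n).trans (le_max_left _ _)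

lemma radiusOfConv_congr_norm (h : ∀ n, ‖a n‖ = ‖b n‖) : radiusOfConv a = radiusOfConv b := by
  simp only [radiusOfConv, h]

lemma le_radiusOfConv_of_norm_mul_pow_le {ρ : NNReal} {M : ℝ}
    (h : ∀ n, ‖c n‖ * (ρ : ℝ) ^ n ≤ (n + 1) * M) : (ρ : ENNReal) ≤ radiusOfConv c := by
  refine ENNReal.le_of_forall_nnreal_lt fun t ht => ?_
  have htρ : (t : ℝ) < ρ := by exact_mod_cast ht
  have hρ : (0 : ℝ) < ρ := t.coe_nonneg.trans_lt htρ
  set θ := (t : ℝ) / ρ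
  have hθ0 : 0 ≤ θ := by positivity
  have hθ1 : θ < 1 := (div_lt_one hρ).2 htρ
  obtain ⟨B, hB⟩ := (((tendsto_self_mul_const_pow_of_lt_one hθ0 hθ1).add
    (tendsto_pow_atTop_nhds_zero_of_lt_one hθ0 hθ1)).const_mul M).bddAbove_range
  refine le_radiusOfConv (C := B) fun n => ?_
  calc ‖c n‖ * (t : ℝ) ^ n = ‖c n‖ * (ρ : ℝ) ^ n * θ ^ n := by
        rw [div_pow, mul_assoc, mul_div_cancel₀ _ (by positivity)]
    _ ≤ (n + 1) * M * θ ^ n := mul_le_mul_of_nonneg_right (h n) (by positivity)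
    _ = M * (n * θ ^ n + θ ^ n) := by ring
    _ ≤ B := hB ⟨n, rfl⟩

lemma radiusOfConv_shift_le (c : ℕ → ℂ) : radiusOfConv (fun n => c (n + 1)) ≤ radiusOfConv c := by
  refine iSup₂_le fun ρ C => iSup_le fun hC => le_radiusOfConv (C := max ‖c 0‖ (ρ * C)) ?_
  rintro (_ | n)
  · simp
  · calc ‖c (n + 1)‖ * (ρ : ℝ) ^ (n + 1) = ρ * (‖c (n + 1)‖ * (ρ : ℝ) ^ n) := by ring
      _ ≤ ρ * C := by gcongr; exact hC n
      _ ≤ _ := le_max_right _ _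

lemma radiusOfConv_mul_le :
    radiusOfConv a * radiusOfConv b ≤ radiusOfConv (fun n => a n * b n) := by
  refine ENNReal.mul_le_of_forall_lt fun ρ hρ σ hσ => ?_
  lift ρ to NNReal using hρ.ne_top
  lift σ to NNReal using hσ.ne_top
  obtain ⟨A, hA0, hA⟩ := exists_norm_mul_pow_le_of_lt_radiusOfConv hρ
  obtain ⟨B, -, hB⟩ := exists_norm_mul_pow_le_of_lt_radiusOfConv hσ
  rw [← ENNReal.coe_mul]
  refine le_radiusOfConv (C := A * B) fun n => ?_
  calc ‖a n * b n‖ * ((ρ * σ : NNReal) : ℝ) ^ n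
      = ‖a n‖ * (ρ : ℝ) ^ n * (‖b n‖ * (σ : ℝ) ^ n) := by
        rw [norm_mul, NNReal.coe_mul, mul_pow]; ring
    _ ≤ A * B := mul_le_mul (hA n) (hB n) (by positivity) hA0

lemma min_radiusOfConv_le_radiusOfConv_sum_antidiagonal :
    min (radiusOfConv a) (radiusOfConv b) ≤
      radiusOfConv (fun n => ∑ p ∈ antidiagonal n, a p.1 * b p.2) := by
  refine ENNReal.le_of_forall_nnreal_lt fun ρ hρ => ?_
  obtain ⟨A, hA0, hA⟩ :=
    exists_norm_mul_pow_le_of_lt_radiusOfConv (hρ.trans_le (min_le_left _ _))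
  obtain ⟨B, -, hB⟩ :=
    exists_norm_mul_pow_le_of_lt_radiusOfConv (hρ.trans_le (min_le_right _ _))
  refine le_radiusOfConv_of_norm_mul_pow_le (M := A * B) fun n => ?_
  calc ‖∑ p ∈ antidiagonal n, a p.1 * b p.2‖ * (ρ : ℝ) ^ n
      ≤ ∑ p ∈ antidiagonal n, ‖a p.1‖ * (ρ : ℝ) ^ p.1 * (‖b p.2‖ * (ρ : ℝ) ^ p.2) := by
        refine (mul_le_mul_of_nonneg_right (norm_sum_le _ _) (by positivity)).trans_eq ?_
        rw [sum_mul]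
        refine sum_congr rfl fun p hp => ?_
        rw [← mem_antidiagonal.1 hp, norm_mul, pow_add]; ring
    _ ≤ ∑ _p ∈ antidiagonal n, A * B :=
        sum_le_sum fun p _ => mul_le_mul (hA _) (hB _) (by positivity) hA0
    _ = (n + 1) * (A * B) := by simp

end radiusOfConv

section qPoch

open ComplexConjugate Polynomial

lemma qPoch_conj (q lam : ℂ) (n : ℕ) : qPoch (conj q) (conj lam) n = conj (qPoch q lam n) := by
  simp [qPoch, map_prod]

lemma norm_qPoch_inv_self {q : ℂ} (hq : ‖q‖ = 1) (n : ℕ) :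
    ‖qPoch q⁻¹ q⁻¹ n‖ = ‖qPoch q q n‖ := by
  rw [Complex.inv_eq_conj hq, qPoch_conj, Complex.norm_conj]

lemma prod_erase_one_sub_pow_mul_inv_pow {q : ℂ} (hq : q ≠ 0) {k n : ℕ} (hk : k ≤ n) :
    ∏ j ∈ (range (n + 1)).erase k, (1 - q ^ j * q⁻¹ ^ k) =
      qPoch q⁻¹ q⁻¹ k * qPoch q q (n - k) := by
  have hsplit : (range (n + 1)).erase k =
      range k ∪ (range (n - k)).map (addLeftEmbedding (k + 1)) := by
    ext j
    simp only [mem_erase, mem_range, mem_union, mem_map, addLeftEmbedding_apply]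
    constructor
    · intro h
      by_cases hjk : j < k
      · exact Or.inl hjk
      · exact Or.inr ⟨j - (k + 1), by omega, by omega⟩
    · rintro (h | ⟨i, hi, rfl⟩) <;> omega
  have hdisj : Disjoint (range k) ((range (n - k)).map (addLeftEmbedding (k + 1))) := by
    simp only [disjoint_left, mem_range, mem_map, addLeftEmbedding_apply]
    rintro j hj ⟨i, -, rfl⟩
    omega
  have hcancel : ∀ a : ℕ, q ^ a * q⁻¹ ^ a = 1 := fun a => by
    rw [← mul_pow, mul_inv_cancel₀ hq, one_pow]
  rw [hsplit, prod_union hdisj, prod_map, qPoch, qPoch, ← prod_range_reflect]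
  congr 1 <;> refine prod_congr rfl fun i hi => ?_
  · obtain ⟨m, rfl⟩ : ∃ m, k = m + (i + 1) := ⟨k - (i + 1), by have := mem_range.1 hi; omega⟩
    rw [show m + (i + 1) - 1 - i = m by omega, pow_add, ← mul_assoc, hcancel, one_mul, pow_succ]
  · rw [addLeftEmbedding_apply, add_assoc, pow_add, mul_right_comm, hcancel, one_mul, add_comm,
      pow_succ]

lemma qPoch_ne_zero {q lam : ℂ} (h : ∀ k : ℕ, q ^ k * lam ≠ 1) (n : ℕ) : qPoch q lam n ≠ 0 :=
  prod_ne_zero_iff.2 fun k _ => sub_ne_zero.2 (h k).symm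

lemma eval_basisDivisor_inv_pow {q : ℂ} (hq : q ≠ 0) (lam : ℂ) (j k : ℕ) :
    (Lagrange.basisDivisor (q ^ k)⁻¹ (q ^ j)⁻¹).eval lam =
      (1 - q ^ j * lam) / (1 - q ^ j * q⁻¹ ^ k) := by
  have hx : q ^ j ≠ 0 := pow_ne_zero _ hq
  have hy : q ^ k ≠ 0 := pow_ne_zero _ hq
  have e1 : (q ^ k)⁻¹ - (q ^ j)⁻¹ = (q ^ j)⁻¹ * (q ^ j * (q ^ k)⁻¹ - 1) := by field_simp
  have e2 : lam - (q ^ j)⁻¹ = (q ^ j)⁻¹ * (q ^ j * lam - 1) := by field_simp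
  rw [Lagrange.basisDivisor, eval_mul, eval_C, eval_sub, eval_X, eval_C, e1, e2, mul_inv,
    inv_inv, mul_mul_mul_comm, mul_inv_cancel₀ hx, one_mul, ← div_eq_inv_mul, ← neg_div_neg_eq,
    neg_sub, neg_sub, inv_pow]

theorem inv_qPoch_succ_eq_sum {q lam : ℂ} (hq : Function.Injective (q ^ · : ℕ → ℂ)) {n : ℕ}
    (hlam : qPoch q lam (n + 1) ≠ 0) :
    (qPoch q lam (n + 1))⁻¹ = ∑ p ∈ antidiagonal n,
      (qPoch q⁻¹ q⁻¹ p.1)⁻¹ * (1 - q ^ p.1 * lam)⁻¹ * (qPoch q q p.2)⁻¹ := by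
  have hq0 : q ≠ 0 := by
    rintro rfl
    exact absurd (hq (by simp : (0 : ℂ) ^ 1 = 0 ^ 2)) (by norm_num)
  have hnodes : Set.InjOn (fun k : ℕ => (q ^ k)⁻¹) (range (n + 1)) :=
    (inv_injective.comp hq).injOn
  have hsum := congrArg (eval lam) (Lagrange.sum_basis hnodes nonempty_range_add_one)
  simp only [eval_finsetSum, eval_one, Lagrange.basis, eval_prod, eval_basisDivisor_inv_pow hq0,
    prod_div_distrib] at hsum
  refine inv_eq_of_mul_eq_one_right (Eq.trans ?_ hsum)
  rw [Nat.sum_antidiagonal_eq_sum_range_succ_mk, mul_sum]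
  refine sum_congr rfl fun k hk => ?_
  have hk' : k ≤ n := Nat.lt_succ_iff.1 (mem_range.1 hk)
  have hfactor : 1 - q ^ k * lam ≠ 0 := prod_ne_zero_iff.1 hlam k hk
  have hrest : ∏ j ∈ (range (n + 1)).erase k, (1 - q ^ j * lam) =
      qPoch q lam (n + 1) / (1 - q ^ k * lam) :=
    eq_div_of_mul_eq hfactor <| by
      rw [mul_comm]; exact mul_prod_erase _ (fun j => 1 - q ^ j * lam) hk
  rw [hrest, prod_erase_one_sub_pow_mul_inv_pow hq0 hk']
  ring

end qPoch

lemma injective_pow_exp_two_pi_I_mul {ω : ℝ} (hω : Irrational ω) :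
    Function.Injective (fun n : ℕ => Complex.exp (2 * Real.pi * Complex.I * ω) ^ n) := by
  intro a b hab
  simp only [← Complex.exp_nat_mul, Complex.exp_eq_exp_iff_exists_int] at hab
  obtain ⟨N, hN⟩ := hab
  by_contra hne
  have hπ : (2 * Real.pi * Complex.I : ℂ) ≠ 0 := by simp [Real.pi_ne_zero]
  have hrat : ((a - b : ℤ) : ℝ) * ω = N := by
    have : ((a - b : ℤ) : ℂ) * ω = N :=
      mul_right_cancel₀ hπ (by push_cast; linear_combination hN)
    exact_mod_cast this
  exact (hω.intCast_mul (by omega)).ne_int N hrat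

theorem stmt1_general (ω : ℝ) (hirr : Irrational ω)
    (q lam : ℂ) (hq : q = Complex.exp (2 * Real.pi * Complex.I * ω))
    (hnot : ∀ k : ℤ, lam ≠ q ^ k) :
    radiusOfConv (fun n => (qPoch q q n)⁻¹) *
        min 1 (radiusOfConv (fun n => (1 - q ^ n * lam)⁻¹)) ≤
      radiusOfConv (fun n => (qPoch q lam n)⁻¹) := by
  have hnorm : ‖q‖ = 1 := by simp [hq, Complex.norm_exp]
  have hinj : Function.Injective (q ^ · : ℕ → ℂ) := by
    subst hq; exact injective_pow_exp_two_pi_I_mul hirr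
  have hlam : ∀ k : ℕ, q ^ k * lam ≠ 1 := fun k hk =>
    hnot (-k) (by rw [zpow_neg, zpow_natCast]; exact (inv_eq_of_mul_eq_one_right hk).symm)
  set R := radiusOfConv (fun n => (qPoch q q n)⁻¹)
  set r := radiusOfConv (fun n => (1 - q ^ n * lam)⁻¹)
  have hR : radiusOfConv (fun n => (qPoch q⁻¹ q⁻¹ n)⁻¹) = R :=
    radiusOfConv_congr_norm fun n => by rw [norm_inv, norm_inv, norm_qPoch_inv_self hnorm]
  calc R * min 1 r = min (radiusOfConv (fun n => (qPoch q⁻¹ q⁻¹ n)⁻¹) * r) R := by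
        rw [mul_min, mul_one, min_comm, hR]
    _ ≤ min (radiusOfConv (fun n => (qPoch q⁻¹ q⁻¹ n)⁻¹ * (1 - q ^ n * lam)⁻¹)) R :=
        min_le_min_right _ radiusOfConv_mul_le
    _ ≤ radiusOfConv (fun n => ∑ p ∈ antidiagonal n,
          (qPoch q⁻¹ q⁻¹ p.1)⁻¹ * (1 - q ^ p.1 * lam)⁻¹ * (qPoch q q p.2)⁻¹) :=
        min_radiusOfConv_le_radiusOfConv_sum_antidiagonal
    _ = radiusOfConv (fun n => (qPoch q lam (n + 1))⁻¹) :=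
        congrArg radiusOfConv <| funext fun n =>
          (inv_qPoch_succ_eq_sum hinj (qPoch_ne_zero hlam (n + 1))).symm
    _ ≤ radiusOfConv (fun n => (qPoch q lam n)⁻¹) :=
        radiusOfConv_shift_le fun n => (qPoch q lam n)⁻¹

theorem stmt1 (ω : ℝ) (hω : ω ∈ Set.Ioo (0 : ℝ) 1) (hirr : Irrational ω)
    (α : ℝ) (hα : α ∈ Set.Ioc (0 : ℝ) 1)
    (q lam : ℂ) (hq : q = Complex.exp (2 * Real.pi * Complex.I * ω))
    (hlam : lam = Complex.exp (2 * Real.pi * Complex.I * α))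
    (hnot : ∀ k : ℤ, lam ≠ q ^ k)
    (hR : 0 < radiusOfConv (fun n => (qPoch q q n)⁻¹))
    (hr : 0 < radiusOfConv (fun n => (1 - q ^ n * lam)⁻¹)) :
    radiusOfConv (fun n => (qPoch q q n)⁻¹) *
        min 1 (radiusOfConv (fun n => (1 - q ^ n * lam)⁻¹)) ≤
      radiusOfConv (fun n => (qPoch q lam n)⁻¹) :=
  stmt1_general ω hirr q lam hq hnot
end

section
/- Let q ∈ ℂ*, not a root of unity, and let λ ∈ ℂ satisfy q^n λ ≠ 1 for all integers n ≥ 0. Then the following identity of formal power series in ℂ[[x]] holds: Σ_{n≥0} x^n/((1−qλ)(1−q²λ)···(1−q^n λ)) = (1−λ) · (Σ_{n≥0} x^n/(q;q)_n) · (Σ_{n≥0} q^{n(n+1)/2} (−x)^n/((q;q)_n (1 − q^n λ))), where the empty product for n = 0 in the left-hand series is 1. -/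
open scoped BigOperators

/-!
Since `(λ; q)_{n+1} = (1 - λ) (qλ; q)_n`, comparing coefficients of `x^n` turns the identity into
`1 / (λ; q)_{n+1} = ∑_{k ≤ n} (-1)^k q^{k(k+1)/2} / ((q;q)_k (q;q)_{n-k} (1 - q^k λ))`,
the partial-fraction expansion of `1 / (λ; q)_{n+1}` in `λ`. That expansion is proved by
induction on `n`: write `(λ; q)_{n+2} = (1 - λ) (qλ; q)_{n+1}`, expand `1 / (qλ; q)_{n+1}` by the
induction hypothesis, and split each `1 / ((1 - q^{k+1} λ)(1 - λ))` into two simple fractions.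
The resulting sum over the `1 / (1 - λ)` parts is the expansion at `λ = q`, known by induction.
-/

open Finset

lemma qPoch_zero (q lam : ℂ) : qPoch q lam 0 = 1 := by
  simp [qPoch]

lemma qPoch_succ (q lam : ℂ) (n : ℕ) : qPoch q lam (n + 1) = qPoch q lam n * (1 - q ^ n * lam) := by
  rw [qPoch, qPoch, prod_range_succ]

lemma qPoch_succ' (q lam : ℂ) (n : ℕ) : qPoch q lam (n + 1) = qPoch q (q * lam) n * (1 - lam) := by
  rw [qPoch, qPoch, prod_range_succ', pow_zero, one_mul]
  congr 1
  exact prod_congr rfl fun k _ => by ring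

lemma inv_mul_inv_eq_partialFraction {K : Type*} [Field K] {t l : K} (ht : 1 - t ≠ 0)
    (hl : 1 - l ≠ 0) (htl : 1 - t * l ≠ 0) :
    (1 - t * l)⁻¹ * (1 - l)⁻¹ = -t * ((1 - t)⁻¹ * (1 - t * l)⁻¹) + (1 - t)⁻¹ * (1 - l)⁻¹ := by
  field_simp
  ring

/-- The `k`-th term of the partial-fraction expansion of `1 / (lam; q)_{n+1}`. -/
noncomputable def qPartialFractionTerm (q lam : ℂ) (n k : ℕ) : ℂ :=
  (-1) ^ k * q ^ (k * (k + 1) / 2) * (qPoch q q k * qPoch q q (n - k) * (1 - q ^ k * lam))⁻¹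

lemma qPartialFractionTerm_zero (q lam : ℂ) (n : ℕ) :
    qPartialFractionTerm q lam n 0 = (qPoch q q n * (1 - lam))⁻¹ := by
  simp [qPartialFractionTerm, qPoch_zero]

lemma qPartialFractionTerm_mul_inv {q lam : ℂ} {n k : ℕ} (hl : 1 - lam ≠ 0)
    (ht : 1 - q ^ (k + 1) ≠ 0) (htl : 1 - q ^ (k + 1) * lam ≠ 0) :
    qPartialFractionTerm q (q * lam) n k * (1 - lam)⁻¹ =
      qPartialFractionTerm q lam (n + 1) (k + 1) + qPartialFractionTerm q q n k * (1 - lam)⁻¹ := by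
  have htri : (k + 1) * (k + 1 + 1) / 2 = k * (k + 1) / 2 + (k + 1) := by
    rw [show (k + 1) * (k + 1 + 1) = k * (k + 1) + 2 * (k + 1) by ring,
      Nat.add_mul_div_left _ _ two_pos]
  have hsplit := inv_mul_inv_eq_partialFraction ht hl htl
  simp only [qPartialFractionTerm, mul_inv] at hsplit ⊢
  rw [Nat.add_sub_add_right, htri, pow_add, qPoch_succ, mul_inv, pow_succ (-1 : ℂ),
    ← pow_succ, show q ^ k * (q * lam) = q ^ (k + 1) * lam by ring]
  linear_combination ((-1) ^ k * q ^ (k * (k + 1) / 2) * (qPoch q q k)⁻¹ * (qPoch q q (n - k))⁻¹) *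
    hsplit

lemma sum_qPartialFractionTerm {q : ℂ} (hq : ∀ n : ℕ, 1 ≤ n → q ^ n ≠ 1) (n : ℕ) :
    ∀ lam : ℂ, (∀ m : ℕ, q ^ m * lam ≠ 1) →
      ∑ k ∈ range (n + 1), qPartialFractionTerm q lam n k = (qPoch q lam (n + 1))⁻¹ := by
  induction n with
  | zero =>
    intro lam _
    simp [qPartialFractionTerm_zero, qPoch_succ, qPoch_zero]
  | succ n ih =>
    intro lam hlam
    have hl : 1 - lam ≠ 0 := sub_ne_zero.mpr (by simpa using (hlam 0).symm)
    have hqlam : ∀ m : ℕ, q ^ m * (q * lam) ≠ 1 := fun m => by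
      rw [← mul_assoc, ← pow_succ]; exact hlam (m + 1)
    have hqq : ∀ m : ℕ, q ^ m * q ≠ 1 := fun m => by
      rw [← pow_succ]; exact hq (m + 1) (Nat.le_add_left 1 m)
    have hsplit (k : ℕ) := qPartialFractionTerm_mul_inv (n := n) hl
      (sub_ne_zero.mpr (by rw [pow_succ]; exact (hqq k).symm)) (sub_ne_zero.mpr (hlam (k + 1)).symm)
    rw [qPoch_succ' q lam (n + 1), mul_inv, ← ih (q * lam) hqlam, sum_mul,
      sum_congr rfl fun k _ => hsplit k, sum_add_distrib, ← sum_mul, ih q hqq,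
      sum_range_succ' _ (n + 1), qPartialFractionTerm_zero, mul_inv]

theorem stmt2_general (q lam : ℂ) (hq : ∀ n : ℕ, 1 ≤ n → q ^ n ≠ 1)
    (hlam : ∀ n : ℕ, q ^ n * lam ≠ 1) :
    (PowerSeries.mk fun n => (qPoch q (q * lam) n)⁻¹) =
      PowerSeries.C (1 - lam) *
        (PowerSeries.mk fun n => (qPoch q q n)⁻¹) *
        (PowerSeries.mk fun n =>
          q ^ (n * (n + 1) / 2) * (-1) ^ n * (qPoch q q n * (1 - q ^ n * lam))⁻¹) := by
  ext n
  have hl : 1 - lam ≠ 0 := sub_ne_zero.mpr (by simpa using (hlam 0).symm)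
  have hcoeff : PowerSeries.coeff n ((PowerSeries.mk fun n => (qPoch q q n)⁻¹) *
      (PowerSeries.mk fun n =>
        q ^ (n * (n + 1) / 2) * (-1) ^ n * (qPoch q q n * (1 - q ^ n * lam))⁻¹)) =
      ∑ k ∈ range (n + 1), qPartialFractionTerm q lam n k := by
    rw [PowerSeries.coeff_mul, ← Nat.sum_antidiagonal_swap]
    simp only [Prod.fst_swap, Prod.snd_swap, PowerSeries.coeff_mk]
    rw [Nat.sum_antidiagonal_eq_sum_range_succ fun i j =>
      (qPoch q q j)⁻¹ * (q ^ (i * (i + 1) / 2) * (-1) ^ i * (qPoch q q i * (1 - q ^ i * lam))⁻¹)]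
    refine sum_congr rfl fun k _ => ?_
    simp only [qPartialFractionTerm, mul_inv]
    ring
  rw [mul_assoc, PowerSeries.coeff_C_mul, hcoeff, sum_qPartialFractionTerm hq n lam hlam,
    qPoch_succ', PowerSeries.coeff_mk, mul_inv, mul_comm _ (1 - lam)⁻¹, mul_inv_cancel_left₀ hl]

theorem stmt2 (q lam : ℂ) (hq0 : q ≠ 0) (hq : ∀ n : ℕ, 1 ≤ n → q ^ n ≠ 1)
    (hlam : ∀ n : ℕ, q ^ n * lam ≠ 1) :
    (PowerSeries.mk fun n => (qPoch q (q * lam) n)⁻¹) =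
      PowerSeries.C (1 - lam) *
        (PowerSeries.mk fun n => (qPoch q q n)⁻¹) *
        (PowerSeries.mk fun n =>
          q ^ (n * (n + 1) / 2) * (-1) ^ n * (qPoch q q n * (1 - q ^ n * lam))⁻¹) :=
  stmt2_general q lam hq hlam
end

section
/- Let ω ∈ (0,1) be irrational, q = exp(2πiω), α ∈ ℝ, λ = exp(2πiα), and suppose nω + α ∉ ℤ for all integers n ≥ 0 (so 1 − q^n λ ≠ 0 for all n ≥ 0). Then the following assertions are equivalent: (1) the power series Σ_{n≥0} x^n/(1 − q^n λ) has positive radius of convergence; (2) limsup_{n→∞} (1/n)·log(1/|1 − λ q^n|) < +∞; (3) liminf_{n→∞} ‖nω + α‖_ℤ^{1/n} > 0. -/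
open scoped BigOperators

/-- The distance from a real number to the nearest integer. -/
noncomputable def distInt (x : ℝ) : ℝ := ⨅ k : ℤ, |x + (k : ℝ)|

/-!
Each of the three conditions says that a positive sequence has an exponential lower bound
`r ^ n ≤ u n` (`r > 0`, `n` large): for (1) and (2) the sequence `‖1 - λ qⁿ‖`, for (3) the
sequence `‖nω + α‖_ℤ`. These are comparable up to constant factors, since
`‖1 - exp (2πix)‖ = 2 sin (π ‖x‖_ℤ)` and `4t ≤ 2 sin (πt) ≤ 2πt` on `[0, 1/2]` by Jordan's
inequality, and a constant factor can be absorbed by shrinking `r`.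
-/

open Filter Real

lemma distInt_eq_abs_sub_round (x : ℝ) : distInt x = |x - round x| := by
  refine le_antisymm ?_ (le_ciInf fun k => by simpa using round_le x (-k))
  have hbdd : BddBelow (Set.range fun k : ℤ => |x + k|) := ⟨0, by rintro y ⟨k, rfl⟩; positivity⟩
  simpa [distInt, sub_eq_add_neg] using ciInf_le hbdd (-round x)

lemma distInt_nonneg (x : ℝ) : 0 ≤ distInt x := by
  rw [distInt_eq_abs_sub_round]
  positivity

lemma distInt_le_half (x : ℝ) : distInt x ≤ 1 / 2 := by
  rw [distInt_eq_abs_sub_round]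
  exact abs_sub_round x

lemma distInt_pos {x : ℝ} (h : ∀ k : ℤ, x ≠ k) : 0 < distInt x := by
  rw [distInt_eq_abs_sub_round, abs_pos, sub_ne_zero]
  exact h (round x)

lemma abs_sin_pi_mul_eq_sin_pi_mul_distInt (x : ℝ) : |sin (π * x)| = sin (π * distInt x) := by
  have hshift : π * x - round x * π = π * (x - round x) := by ring
  have habs : |π * (x - round x)| = π * |x - round x| := by rw [abs_mul, abs_of_pos pi_pos]
  have hle : |π * (x - round x)| ≤ π := by
    rw [habs]
    nlinarith [abs_sub_round x, pi_pos]
  rw [distInt_eq_abs_sub_round, ← habs, ← abs_sin_eq_sin_abs_of_abs_le_pi hle,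
    ← hshift, sin_sub_int_mul_pi, abs_mul, abs_zpow, abs_neg, abs_one, one_zpow, one_mul]

lemma norm_one_sub_exp_eq (x : ℝ) :
    ‖1 - Complex.exp (2 * π * Complex.I * x)‖ = 2 * sin (π * distInt x) := by
  rw [norm_sub_rev,
    show 2 * π * Complex.I * x = Complex.I * ((2 * π * x : ℝ) : ℂ) by push_cast; ring,
    Complex.norm_exp_I_mul_ofReal_sub_one, show 2 * π * x / 2 = π * x by ring, norm_mul,
    Real.norm_two, Real.norm_eq_abs, abs_sin_pi_mul_eq_sin_pi_mul_distInt]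

lemma four_mul_distInt_le_norm_one_sub_exp (x : ℝ) :
    4 * distInt x ≤ ‖1 - Complex.exp (2 * π * Complex.I * x)‖ := by
  have hjordan := mul_le_sin (x := π * distInt x) (by positivity [distInt_nonneg x])
    (by nlinarith [distInt_le_half x, pi_pos])
  rw [norm_one_sub_exp_eq]
  field_simp at hjordan
  linarith

lemma norm_one_sub_exp_le_two_pi_mul_distInt (x : ℝ) :
    ‖1 - Complex.exp (2 * π * Complex.I * x)‖ ≤ 2 * π * distInt x := by
  rw [norm_one_sub_exp_eq]
  have := sin_le (mul_nonneg pi_pos.le (distInt_nonneg x))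
  linarith

def HasExpLowerBound (u : ℕ → ℝ) : Prop := ∃ r > 0, ∀ᶠ n in atTop, r ^ n ≤ u n

namespace HasExpLowerBound

lemma of_eventually_pow_le_mul {u : ℕ → ℝ} {r C : ℝ} (hr : 0 < r) (hC : 0 < C)
    (h : ∀ᶠ n in atTop, r ^ n ≤ C * u n) : HasExpLowerBound u := by
  have hsmall : ∀ᶠ n in atTop, (1 / 2 : ℝ) ^ n < C⁻¹ :=
    (tendsto_pow_atTop_nhds_zero_of_lt_one (by norm_num) (by norm_num)).eventually_lt_const
      (inv_pos.mpr hC)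
  refine ⟨r / 2, half_pos hr, (h.and hsmall).mono fun n ⟨hn, hsn⟩ => ?_⟩
  calc (r / 2) ^ n = r ^ n * (1 / 2) ^ n := by ring
    _ ≤ C * u n * C⁻¹ := mul_le_mul hn hsn.le (by positivity) ((pow_nonneg hr.le n).trans hn)
    _ = u n := by field_simp

lemma of_le_mul {u v : ℕ → ℝ} {C : ℝ} (h : HasExpLowerBound u) (hC : 0 < C)
    (huv : ∀ n, u n ≤ C * v n) : HasExpLowerBound v := by
  obtain ⟨r, hr, hu⟩ := h
  exact of_eventually_pow_le_mul hr hC (hu.mono fun n hn => hn.trans (huv n))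

end HasExpLowerBound

lemma radiusOfConv_eq_radius_ofScalars (c : ℕ → ℂ) :
    radiusOfConv c = (FormalMultilinearSeries.ofScalars ℂ c).radius := by
  simp [radiusOfConv, FormalMultilinearSeries.radius]

lemma radiusOfConv_inv_pos_iff {u : ℕ → ℂ} (hu : ∀ n, u n ≠ 0) :
    0 < radiusOfConv (fun n => (u n)⁻¹) ↔ HasExpLowerBound (fun n => ‖u n‖) := by
  rw [radiusOfConv_eq_radius_ofScalars]
  set p := FormalMultilinearSeries.ofScalars ℂ fun n => (u n)⁻¹
  have hp (n : ℕ) : ‖p n‖ = ‖u n‖⁻¹ := by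
    simp [p]
  constructor
  · intro h
    obtain ⟨r, hr, hrp⟩ := ENNReal.lt_iff_exists_nnreal_btwn.mp h
    obtain ⟨C, hC, hbound⟩ := p.norm_mul_pow_le_of_lt_radius hrp
    refine HasExpLowerBound.of_eventually_pow_le_mul (r := r) (by exact_mod_cast hr) hC
      (Eventually.of_forall fun n => ?_)
    have := hbound n
    rwa [hp, inv_mul_le_iff₀ (norm_pos_iff.mpr (hu n)), mul_comm] at this
  · rintro ⟨r, hr, hru⟩
    have hle : (r.toNNReal : ENNReal) ≤ p.radius := by
      refine p.le_radius_of_eventually_le 1 (hru.mono fun n hn => ?_)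
      rw [hp, Real.coe_toNNReal r hr.le, inv_mul_le_one₀ (norm_pos_iff.mpr (hu n))]
      exact hn
    exact lt_of_lt_of_le (by simpa using hr) hle

lemma pow_le_iff_log_one_div_div_le {r u : ℝ} {n : ℕ} (hr : 0 < r) (hu : 0 < u) (hn : 0 < n) :
    r ^ n ≤ u ↔ log (1 / u) / n ≤ -log r := by
  rw [← log_le_log_iff (pow_pos hr n) hu, log_pow, one_div, log_inv,
    div_le_iff₀ (Nat.cast_pos.mpr hn)]
  constructor <;> intro h <;> linarith

lemma limsup_log_one_div_div_lt_top_iff {u : ℕ → ℝ} (hu : ∀ n, 0 < u n) :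
    limsup (fun n : ℕ => ((log (1 / u n) / n : ℝ) : EReal)) atTop < ⊤ ↔
      HasExpLowerBound u := by
  constructor
  · intro h
    obtain ⟨b, hb, -⟩ := EReal.lt_iff_exists_real_btwn.mp h
    refine ⟨exp (-b), exp_pos _, ?_⟩
    filter_upwards [eventually_lt_of_limsup_lt hb, eventually_gt_atTop 0] with n hn hn0
    rw [pow_le_iff_log_one_div_div_le (exp_pos _) (hu n) hn0, log_exp, neg_neg]
    exact_mod_cast hn.le
  · rintro ⟨r, hr, hru⟩
    refine lt_of_le_of_lt (limsup_le_of_le (a := ((-log r : ℝ) : EReal)) ?_ ?_)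
      (EReal.coe_lt_top _)
    · isBoundedDefault
    filter_upwards [hru, eventually_gt_atTop 0] with n hn hn0
    exact_mod_cast (pow_le_iff_log_one_div_div_le hr (hu n) hn0).mp hn

lemma pow_le_iff_le_rpow_one_div {r u : ℝ} {n : ℕ} (hr : 0 ≤ r) (hu : 0 ≤ u) (hn : 0 < n) :
    r ^ n ≤ u ↔ r ≤ u ^ ((1 : ℝ) / n) := by
  rw [one_div, le_rpow_inv_iff_of_pos hr hu (Nat.cast_pos.mpr hn), rpow_natCast]

lemma liminf_rpow_one_div_pos_iff {u : ℕ → ℝ} (hu0 : ∀ n, 0 ≤ u n) (hu1 : ∀ n, u n ≤ 1) :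
    0 < liminf (fun n : ℕ => u n ^ ((1 : ℝ) / n)) atTop ↔ HasExpLowerBound u := by
  constructor
  · intro h
    have hbdd : IsBoundedUnder (· ≥ ·) atTop fun n : ℕ => u n ^ ((1 : ℝ) / n) :=
      isBoundedUnder_of ⟨0, fun n => rpow_nonneg (hu0 n) _⟩
    refine ⟨_, half_pos h, ?_⟩
    filter_upwards [eventually_lt_of_lt_liminf (half_lt_self h) hbdd,
      eventually_gt_atTop 0] with n hn hn0
    exact (pow_le_iff_le_rpow_one_div (half_pos h).le (hu0 n) hn0).mpr hn.le
  · rintro ⟨r, hr, hru⟩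
    have hbdd : IsBoundedUnder (· ≤ ·) atTop fun n : ℕ => u n ^ ((1 : ℝ) / n) :=
      isBoundedUnder_of ⟨1, fun n => rpow_le_one (hu0 n) (hu1 n) (by positivity)⟩
    refine hr.trans_le (le_liminf_of_le hbdd.isCobounded_ge ?_)
    filter_upwards [hru, eventually_gt_atTop 0] with n hn hn0
    exact (pow_le_iff_le_rpow_one_div hr.le (hu0 n) hn0).mp hn

theorem stmt7_general (ω : ℝ) (α : ℝ)
    (q lam : ℂ) (hq : q = Complex.exp (2 * Real.pi * Complex.I * ω))
    (hlam : lam = Complex.exp (2 * Real.pi * Complex.I * α))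
    (hnz : ∀ n : ℕ, ∀ k : ℤ, (n : ℝ) * ω + α ≠ (k : ℝ)) :
    List.TFAE
      [0 < radiusOfConv (fun n => (1 - q ^ n * lam)⁻¹),
        Filter.limsup
            (fun n : ℕ => ((Real.log (1 / ‖1 - lam * q ^ n‖) / n : ℝ) : EReal))
            Filter.atTop < ⊤,
        0 < Filter.liminf (fun n : ℕ => distInt ((n : ℝ) * ω + α) ^ ((1 : ℝ) / n))
            Filter.atTop] := by
  have hexp (n : ℕ) : lam * q ^ n = Complex.exp (2 * π * Complex.I * ((n * ω + α : ℝ) : ℂ)) := by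
    rw [hq, hlam, ← Complex.exp_nat_mul, ← Complex.exp_add]
    push_cast
    ring_nf
  have hd_le (n : ℕ) : distInt (n * ω + α) ≤ 4⁻¹ * ‖1 - lam * q ^ n‖ := by
    have := four_mul_distInt_le_norm_one_sub_exp (n * ω + α)
    rw [hexp]
    linarith
  have hle_d (n : ℕ) : ‖1 - lam * q ^ n‖ ≤ 2 * π * distInt (n * ω + α) := by
    rw [hexp]
    exact norm_one_sub_exp_le_two_pi_mul_distInt _
  have hpos (n : ℕ) : 0 < ‖1 - lam * q ^ n‖ := by
    have := distInt_pos (hnz n)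
    linarith [hd_le n]
  have hcomm : (fun n : ℕ => (1 - q ^ n * lam)⁻¹) = fun n => (1 - lam * q ^ n)⁻¹ := by
    funext n
    rw [mul_comm]
  tfae_have 1 ↔ 2 := by
    rw [hcomm, radiusOfConv_inv_pos_iff fun n => norm_pos_iff.mp (hpos n),
      limsup_log_one_div_div_lt_top_iff hpos]
  tfae_have 2 ↔ 3 := by
    rw [limsup_log_one_div_div_lt_top_iff hpos,
      liminf_rpow_one_div_pos_iff (fun n => distInt_nonneg _)
        (fun n => (distInt_le_half _).trans (by norm_num))]
    exact ⟨fun h => h.of_le_mul two_pi_pos hle_d, fun h => h.of_le_mul (by norm_num) hd_le⟩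
  tfae_finish

theorem stmt7 (ω : ℝ) (hω : ω ∈ Set.Ioo (0 : ℝ) 1) (hirr : Irrational ω) (α : ℝ)
    (q lam : ℂ) (hq : q = Complex.exp (2 * Real.pi * Complex.I * ω))
    (hlam : lam = Complex.exp (2 * Real.pi * Complex.I * α))
    (hnz : ∀ n : ℕ, ∀ k : ℤ, (n : ℝ) * ω + α ≠ (k : ℝ)) :
    List.TFAE
      [0 < radiusOfConv (fun n => (1 - q ^ n * lam)⁻¹),
        Filter.limsup
            (fun n : ℕ => ((Real.log (1 / ‖1 - lam * q ^ n‖) / n : ℝ) : EReal))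
            Filter.atTop < ⊤,
        0 < Filter.liminf (fun n : ℕ => distInt ((n : ℝ) * ω + α) ^ ((1 : ℝ) / n))
            Filter.atTop] :=
  stmt7_general ω α q lam hq hlam hnz
end

section
/- There exists a universal constant C₀ > 0 with the following property: for every irrational ω ∈ (0,1) such that the Brjuno sum B(ω) = Σ_{n≥0} (log q_{n+1})/q_n is finite, where q_n are the denominators of the convergents of the continued fraction expansion of ω, the power series Σ_{n≥0} x^n/(q;q)_n with q = exp(2πiω) has radius of convergence at least exp(−B(ω) − C₀); in particular this radius is positive. -/
/-!
Write `‖x‖` for the distance from `x` to the nearest integer. Since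
`‖1 - e^{2πikω}‖ ≥ 4‖kω‖`, it suffices to bound `∑_{k ≤ n} log (4‖kω‖)⁻¹` by `n B(ω)`.
Give `k` the level `m`, the least index with `|q_m ω - p_m| ≤ 2‖kω‖`. Then
`‖kω‖ ≥ |q_m ω - p_m| / 2 ≥ 1 / (4 q_{m+1})`, while by the best approximation property of the
convergents an integer of level `m` is at least `q_m`, and two of them differ by at least `q_m`
(their difference `j` has `‖jω‖ < |q_{m-1} ω - p_{m-1}|`). So at most `n / q_m` of the `k ≤ n`
have level `m`, and the sum is at most `∑_m (n / q_m) log q_{m+1} ≤ n B(ω)`: the coefficients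
are `O(e^{n B(ω)})`.
-/

open scoped BigOperators

/-- The denominators of the convergents of the continued fraction expansion of `ω`. -/
noncomputable def cfDen (ω : ℝ) (n : ℕ) : ℝ := (GenContFract.of ω).dens n

open Finset

theorem Finset.card_mul_le_of_le_of_add_le {A : Finset ℕ} {d n : ℕ} (hd : ∀ a ∈ A, d ≤ a)
    (hn : ∀ a ∈ A, a ≤ n) (hgap : ∀ a ∈ A, ∀ b ∈ A, a < b → a + d ≤ b) : #A * d ≤ n := by
  rcases Nat.eq_zero_or_pos d with rfl | hd0
  · simp
  -- `a ↦ a / d` is strictly monotone on `A` and lands in `[1, n / d]`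
  have hmono : StrictMonoOn (· / d) (A : Set ℕ) := fun a ha b hb hab => by
    have := Nat.div_le_div_right (c := d) (hgap a ha b hb hab)
    rwa [Nat.add_div_right _ hd0, Nat.add_one_le_iff] at this
  have hmaps : Set.MapsTo (· / d) A (Finset.Icc 1 (n / d)) := by
    intro a ha
    simp only [Finset.coe_Icc, Set.mem_Icc]
    exact ⟨(Nat.one_le_div_iff hd0).2 (hd a ha), Nat.div_le_div_right (hn a ha)⟩
  have hcard := Finset.card_le_card_of_injOn _ hmaps hmono.injOn
  simp only [Nat.card_Icc, add_tsub_cancel_right] at hcard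
  calc #A * d ≤ n / d * d := Nat.mul_le_mul_right d hcard
    _ ≤ n := Nat.div_mul_le_self n d

theorem Finset.natCast_card_mul_le_of_le_of_add_le {A : Finset ℕ} {d : ℝ} {n : ℕ}
    (hd : ∀ a ∈ A, d ≤ a) (hn : ∀ a ∈ A, a ≤ n)
    (hgap : ∀ a ∈ A, ∀ b ∈ A, a < b → (a : ℝ) + d ≤ b) : (#A : ℝ) * d ≤ n := by
  have hnat : #A * ⌈d⌉₊ ≤ n := by
    refine Finset.card_mul_le_of_le_of_add_le (fun a ha => Nat.ceil_le.2 (hd a ha)) hn ?_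
    intro a ha b hb hab
    have := hgap a ha b hb hab
    have : ⌈d⌉₊ ≤ b - a := Nat.ceil_le.2 (by push_cast [hab.le]; linarith)
    omega
  calc (#A : ℝ) * d ≤ #A * ⌈d⌉₊ := by gcongr; exact Nat.le_ceil d
    _ ≤ n := by exact_mod_cast hnat

theorem half_le_abs_and_mul_nonpos_of_abs_sub_eq_one {a b : ℝ} (ha : |a| ≤ 1 / 2) (hb : |b| ≤ 1)
    (hab : |a - b| = 1) : 1 / 2 ≤ |b| ∧ a * b ≤ 0 := by
  constructor
  · linarith [abs_sub a b]
  · rcases abs_cases a with ⟨ha', _⟩ | ⟨ha', _⟩ <;> rcases abs_cases b with ⟨hb', _⟩ | ⟨hb', _⟩ <;>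
      rcases abs_cases (a - b) with ⟨hab', _⟩ | ⟨hab', _⟩ <;> nlinarith

theorem abs_le_abs_add_of_mul_nonneg {a b : ℝ} (hab : 0 ≤ a * b) : |a| ≤ |a + b| := by
  rcases abs_cases a with ⟨ha', _⟩ | ⟨ha', _⟩ <;>
    rcases abs_cases (a + b) with ⟨h', _⟩ | ⟨h', _⟩ <;> nlinarith

noncomputable def distToInt (x : ℝ) : ℝ := |x - round x|

theorem Irrational.distToInt_pos {x : ℝ} (hx : Irrational x) : 0 < distToInt x :=
  abs_pos.2 (sub_ne_zero.2 (hx.ne_int _))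

open Complex in
theorem four_mul_distToInt_le_norm_one_sub_exp (x : ℝ) :
    4 * distToInt x ≤ ‖1 - exp (2 * Real.pi * I * x)‖ := by
  set t := x - round x
  have hexp : exp (2 * Real.pi * I * x) = exp (I * ↑(2 * Real.pi * t)) := by
    have : 2 * Real.pi * I * x = I * ↑(2 * Real.pi * t) + round x * (2 * Real.pi * I) := by
      simp only [t]; push_cast; ring
    rw [this, exp_add, exp_int_mul_two_pi_mul_I, mul_one]
  have ht : |Real.pi * t| ≤ Real.pi / 2 := by
    rw [abs_mul, abs_of_pos Real.pi_pos]
    nlinarith [abs_sub_round x, Real.pi_pos]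
  have hsin := Real.mul_abs_le_abs_sin ht
  rw [hexp, norm_sub_rev, norm_exp_I_mul_ofReal_sub_one, Real.norm_eq_abs, abs_mul,
    abs_two, show 2 * Real.pi * t / 2 = Real.pi * t by ring, distToInt]
  rw [abs_mul, abs_of_pos Real.pi_pos] at hsin
  field_simp at hsin
  linarith

theorem le_radiusOfConv_of_norm_mul_pow_le_s12 {c : ℕ → ℂ} {r C : ℝ} (hr : 0 ≤ r)
    (h : ∀ n, ‖c n‖ * r ^ n ≤ C) : ENNReal.ofReal r ≤ radiusOfConv c :=
  le_iSup₂_of_le r.toNNReal C <| le_iSup_of_le (by simpa [Real.coe_toNNReal _ hr] using h) le_rfl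

theorem GenContFract.of_contsAux_mem_bot {K : Type*} [Field K] [LinearOrder K]
    [FloorRing K] (v : K) (n : ℕ) :
    ((GenContFract.of v).contsAux n).a ∈ (⊥ : Subring K) ∧
      ((GenContFract.of v).contsAux n).b ∈ (⊥ : Subring K) := by
  induction n using Nat.twoStepInduction with
  | zero => simp [zeroth_contAux_eq_one_zero]
  | one => simp [first_contAux_eq_h_one, of_h_eq_floor]
  | more n ih₀ ih₁ =>
    rcases Option.eq_none_or_eq_some ((GenContFract.of v).s.get? n) with hnone | ⟨gp, hgp⟩
    · rwa [contsAux_stable_step_of_terminated hnone]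
    · obtain ⟨ha, z, hz⟩ := of_partNum_eq_one_and_exists_int_partDen_eq hgp
      rw [contsAux_recurrence hgp rfl rfl, ha, hz]
      exact ⟨add_mem (mul_mem (intCast_mem _ z) ih₁.1) (by simpa using ih₀.1),
        add_mem (mul_mem (intCast_mem _ z) ih₁.2) (by simpa using ih₀.2)⟩

noncomputable def cfNum (ω : ℝ) (n : ℕ) : ℝ := (GenContFract.of ω).nums n

noncomputable def cfErr (ω : ℝ) (n : ℕ) : ℝ := cfDen ω n * ω - cfNum ω n

theorem exists_intCast_eq_cfNum (ω : ℝ) (n : ℕ) : ∃ p : ℤ, (p : ℝ) = cfNum ω n :=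
  Subring.mem_bot.1 (GenContFract.of_contsAux_mem_bot ω (n + 1)).1

theorem exists_intCast_eq_cfDen (ω : ℝ) (n : ℕ) : ∃ q : ℤ, (q : ℝ) = cfDen ω n :=
  Subring.mem_bot.1 (GenContFract.of_contsAux_mem_bot ω (n + 1)).2

theorem cfDen_zero (ω : ℝ) : cfDen ω 0 = 1 := GenContFract.zeroth_den_eq_one

section Irrational

variable {ω : ℝ}

theorem Irrational.not_terminatedAt_of (hω : Irrational ω) (n : ℕ) :
    ¬(GenContFract.of ω).TerminatedAt n := fun h =>
  let ⟨q, hq⟩ := (GenContFract.terminates_iff_rat ω).1 ⟨n, h⟩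
  hω ⟨q, hq.symm⟩

theorem fib_succ_le_cfDen (hω : Irrational ω) (n : ℕ) : (Nat.fib (n + 1) : ℝ) ≤ cfDen ω n :=
  GenContFract.succ_nth_fib_le_of_nth_den (Or.inr (hω.not_terminatedAt_of _))

theorem natCast_le_cfDen (hω : Irrational ω) (n : ℕ) : (n : ℝ) ≤ cfDen ω n := by
  have : n ≤ Nat.fib (n + 1) := by have := Nat.le_fib_add_one (n + 1); omega
  exact le_trans (by exact_mod_cast this) (fib_succ_le_cfDen hω n)

theorem one_le_cfDen (hω : Irrational ω) (n : ℕ) : 1 ≤ cfDen ω n :=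
  le_trans (by exact_mod_cast Nat.fib_pos.2 n.succ_pos) (fib_succ_le_cfDen hω n)

theorem cfDen_pos (hω : Irrational ω) (n : ℕ) : 0 < cfDen ω n :=
  one_pos.trans_le (one_le_cfDen hω n)

theorem cfDen_add_cfDen_succ_le (hω : Irrational ω) (n : ℕ) :
    cfDen ω n + cfDen ω (n + 1) ≤ cfDen ω (n + 2) := by
  obtain ⟨gp, hgp⟩ := Option.ne_none_iff_exists'.1 (hω.not_terminatedAt_of (n + 1))
  have hb : 1 ≤ gp.b := GenContFract.of_one_le_get?_partDen (GenContFract.partDen_eq_s_b hgp)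
  have ha : gp.a = 1 := GenContFract.of_partNum_eq_one (GenContFract.partNum_eq_s_a hgp)
  have hrec : cfDen ω (n + 2) = gp.b * cfDen ω (n + 1) + gp.a * cfDen ω n :=
    GenContFract.dens_recurrence hgp rfl rfl
  rw [hrec, ha]
  nlinarith [cfDen_pos hω (n + 1)]

theorem abs_cfErr_le (hω : Irrational ω) (n : ℕ) : |cfErr ω n| ≤ 1 / cfDen ω (n + 1) := by
  have h := GenContFract.abs_sub_convs_le (hω.not_terminatedAt_of n)
  rw [GenContFract.conv_eq_num_div_den] at h
  have hq := cfDen_pos hω n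
  have hq' := cfDen_pos hω (n + 1)
  have e : cfErr ω n = cfDen ω n * (ω - cfNum ω n / cfDen ω n) := by
    rw [cfErr]; field_simp
  rw [e, abs_mul, abs_of_pos hq]
  calc cfDen ω n * |ω - cfNum ω n / cfDen ω n|
      ≤ cfDen ω n * (1 / (cfDen ω n * cfDen ω (n + 1))) := by gcongr; exact h
    _ = 1 / cfDen ω (n + 1) := by field_simp

theorem cfNum_mul_cfDen_succ_sub (hω : Irrational ω) (n : ℕ) :
    cfNum ω n * cfDen ω (n + 1) - cfDen ω n * cfNum ω (n + 1) = (-1) ^ (n + 1) :=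
  SimpContFract.determinant (s := ⟨GenContFract.of ω, GenContFract.of_isSimpContFract ω⟩)
    (hω.not_terminatedAt_of n)

theorem cfDen_mul_cfErr_succ_sub (hω : Irrational ω) (n : ℕ) :
    cfDen ω n * cfErr ω (n + 1) - cfDen ω (n + 1) * cfErr ω n = (-1) ^ (n + 1) := by
  rw [← cfNum_mul_cfDen_succ_sub hω n, cfErr, cfErr]
  ring

theorem one_div_two_mul_cfDen_succ_le_abs_cfErr_and_cfErr_mul_cfErr_succ_nonpos
    (hω : Irrational ω) (n : ℕ) :
    1 / (2 * cfDen ω (n + 1)) ≤ |cfErr ω n| ∧ cfErr ω n * cfErr ω (n + 1) ≤ 0 := by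
  have hq₀ := cfDen_pos hω n
  have hq₁ := cfDen_pos hω (n + 1)
  have hq₂ := cfDen_pos hω (n + 2)
  have ha : |cfDen ω n * cfErr ω (n + 1)| ≤ 1 / 2 := by
    rw [abs_mul, abs_of_pos hq₀]
    calc cfDen ω n * |cfErr ω (n + 1)| ≤ cfDen ω n * (1 / cfDen ω (n + 2)) := by
          gcongr; exact abs_cfErr_le hω (n + 1)
      _ ≤ 1 / 2 := by
          rw [mul_one_div, div_le_iff₀ hq₂]
          have : cfDen ω n ≤ cfDen ω (n + 1) := GenContFract.of_den_mono
          linarith [cfDen_add_cfDen_succ_le hω n]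
  have hb : |cfDen ω (n + 1) * cfErr ω n| ≤ 1 := by
    rw [abs_mul, abs_of_pos hq₁]
    calc cfDen ω (n + 1) * |cfErr ω n| ≤ cfDen ω (n + 1) * (1 / cfDen ω (n + 1)) := by
          gcongr; exact abs_cfErr_le hω n
      _ = 1 := by field_simp
  have hab : |cfDen ω n * cfErr ω (n + 1) - cfDen ω (n + 1) * cfErr ω n| = 1 := by
    simp [cfDen_mul_cfErr_succ_sub hω n]
  obtain ⟨hlow, hsign⟩ := half_le_abs_and_mul_nonpos_of_abs_sub_eq_one ha hb hab
  constructor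
  · rw [abs_mul, abs_of_pos hq₁] at hlow
    rw [div_le_iff₀ (by positivity)]
    linarith
  · have : cfDen ω n * cfErr ω (n + 1) * (cfDen ω (n + 1) * cfErr ω n) =
        (cfDen ω n * cfDen ω (n + 1)) * (cfErr ω n * cfErr ω (n + 1)) := by ring
    rw [this] at hsign
    exact nonpos_of_mul_nonpos_right hsign (by positivity)

theorem cfDen_succ_le_of_abs_sub_lt_abs_cfErr (hω : Irrational ω) {m k : ℕ} (hk : 0 < k) (p : ℤ)
    (h : |k * ω - p| < |cfErr ω m|) : cfDen ω (m + 1) ≤ k := by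
  by_contra! hkq
  obtain ⟨P₀, hP₀⟩ := exists_intCast_eq_cfNum ω m
  obtain ⟨P₁, hP₁⟩ := exists_intCast_eq_cfNum ω (m + 1)
  obtain ⟨Q₀, hQ₀⟩ := exists_intCast_eq_cfDen ω m
  obtain ⟨Q₁, hQ₁⟩ := exists_intCast_eq_cfDen ω (m + 1)
  set ε : ℤ := (-1) ^ (m + 1)
  have hε : ε * ε = 1 := by rw [← mul_pow]; norm_num
  have hdet : P₀ * Q₁ - Q₀ * P₁ = ε := by
    have := cfNum_mul_cfDen_succ_sub hω m
    rw [← hP₀, ← hP₁, ← hQ₀, ← hQ₁] at this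
    exact_mod_cast this
  -- Solve `k = x q_m + y q_{m+1}`, `p = x p_m + y p_{m+1}` in integers (the determinant is `±1`).
  -- As `0 < k < q_{m+1}`, `x ≠ 0` and `x`, `y` have opposite signs; so do the errors `δ_m`,
  -- `δ_{m+1}`, hence `kω - p = x δ_m + y δ_{m+1}` has no cancellation:
  -- `|kω - p| ≥ |x δ_m| ≥ |δ_m|`.
  set x : ℤ := ε * (p * Q₁ - k * P₁)
  set y : ℤ := ε * (P₀ * k - Q₀ * p)
  have hk_eq : x * Q₀ + y * Q₁ = k := by linear_combination (ε * k) * hdet + k * hε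
  have hp_eq : x * P₀ + y * P₁ = p := by linear_combination (ε * p) * hdet + p * hε
  have hQ₀pos : 0 < Q₀ := by exact_mod_cast hQ₀ ▸ cfDen_pos hω m
  have hkQ₁ : (k : ℤ) < Q₁ := by exact_mod_cast hQ₁ ▸ hkq
  have hx : x ≠ 0 := by
    rintro hx
    rw [hx, zero_mul, zero_add] at hk_eq
    rcases lt_trichotomy y 0 with hy | hy | hy <;> nlinarith
  have hxy : x * y ≤ 0 := by
    rcases lt_trichotomy y 0 with hy | hy | hy
    · nlinarith [show 0 < x by nlinarith]
    · simp [hy]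
    · nlinarith [show x < 0 by nlinarith]
  have hsplit : (k : ℝ) * ω - p = x * cfErr ω m + y * cfErr ω (m + 1) := by
    have hk' : (x * Q₀ + y * Q₁ : ℝ) = k := by exact_mod_cast hk_eq
    have hp' : (x * P₀ + y * P₁ : ℝ) = p := by exact_mod_cast hp_eq
    rw [cfErr, cfErr, ← hP₀, ← hP₁, ← hQ₀, ← hQ₁, ← hk', ← hp']
    ring
  have hsame : 0 ≤ (x * cfErr ω m) * (y * cfErr ω (m + 1)) := by
    have hsign := (one_div_two_mul_cfDen_succ_le_abs_cfErr_and_cfErr_mul_cfErr_succ_nonpos hω m).2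
    have : ((x * y : ℤ) : ℝ) ≤ 0 := by exact_mod_cast hxy
    push_cast at this
    nlinarith
  have hx1 : (1 : ℝ) ≤ |(x : ℝ)| := by exact_mod_cast Int.one_le_abs hx
  have : |cfErr ω m| ≤ |(k : ℝ) * ω - p| :=
    calc |cfErr ω m| ≤ |(x : ℝ)| * |cfErr ω m| := le_mul_of_one_le_left (abs_nonneg _) hx1
      _ = |x * cfErr ω m| := (abs_mul _ _).symm
      _ ≤ |(k : ℝ) * ω - p| := hsplit ▸ abs_le_abs_add_of_mul_nonneg hsame
  linarith

theorem exists_abs_cfErr_le (hω : Irrational ω) {ε : ℝ} (hε : 0 < ε) :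
    ∃ m, |cfErr ω m| ≤ ε := by
  obtain ⟨N, hN⟩ := exists_nat_gt (1 / ε)
  refine ⟨N, (abs_cfErr_le hω N).trans ((one_div_le hε (cfDen_pos hω _)).1 ?_)⟩
  have := natCast_le_cfDen hω (N + 1)
  push_cast at this
  linarith

-- `sInf ∅ = 0`, but for `k > 0` the set is nonempty by `exists_abs_cfErr_le`.
noncomputable def cfLevel (ω : ℝ) (k : ℕ) : ℕ := sInf {m | |cfErr ω m| ≤ 2 * distToInt (k * ω)}

theorem abs_cfErr_cfLevel_le (hω : Irrational ω) {k : ℕ} (hk : 0 < k) :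
    |cfErr ω (cfLevel ω k)| ≤ 2 * distToInt (k * ω) :=
  Nat.sInf_mem (exists_abs_cfErr_le hω (by linarith [(hω.natCast_mul hk.ne').distToInt_pos]))

theorem two_mul_distToInt_lt_of_lt_cfLevel {k j : ℕ} (hj : j < cfLevel ω k) :
    2 * distToInt (k * ω) < |cfErr ω j| :=
  not_le.1 (Nat.notMem_of_lt_sInf hj)

theorem one_div_four_mul_cfDen_le_distToInt (hω : Irrational ω) {k : ℕ} (hk : 0 < k) :
    1 / (4 * cfDen ω (cfLevel ω k + 1)) ≤ distToInt (k * ω) := by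
  have h := (one_div_two_mul_cfDen_succ_le_abs_cfErr_and_cfErr_mul_cfErr_succ_nonpos hω
    (cfLevel ω k)).1.trans (abs_cfErr_cfLevel_le hω hk)
  have := cfDen_pos hω (cfLevel ω k + 1)
  rw [div_le_iff₀ (by positivity)] at h ⊢
  linarith

theorem cfDen_cfLevel_le (hω : Irrational ω) {k : ℕ} (hk : 0 < k) :
    cfDen ω (cfLevel ω k) ≤ k := by
  match h : cfLevel ω k with
  | 0 => rw [cfDen_zero]; exact_mod_cast hk
  | j + 1 =>
    refine cfDen_succ_le_of_abs_sub_lt_abs_cfErr hω hk (round (k * ω)) ?_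
    have hj := two_mul_distToInt_lt_of_lt_cfLevel (ω := ω) (k := k) (j := j) (by omega)
    have := (hω.natCast_mul hk.ne').distToInt_pos
    rw [distToInt] at hj this
    linarith

theorem add_cfDen_cfLevel_le (hω : Irrational ω) {k k' : ℕ} (hkk' : k < k')
    (hlevel : cfLevel ω k = cfLevel ω k') : k + cfDen ω (cfLevel ω k) ≤ k' := by
  match h : cfLevel ω k with
  | 0 => rw [cfDen_zero]; exact_mod_cast hkk'
  | j + 1 =>
    have hj := two_mul_distToInt_lt_of_lt_cfLevel (ω := ω) (k := k) (j := j) (by omega)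
    have hj' := two_mul_distToInt_lt_of_lt_cfLevel (ω := ω) (k := k') (j := j) (by omega)
    have hsub : |((k' - k : ℕ) : ℝ) * ω - ((round (k' * ω) - round (k * ω) : ℤ) : ℝ)| ≤
        distToInt (k' * ω) + distToInt (k * ω) := by
      rw [distToInt, distToInt, Nat.cast_sub hkk'.le]
      push_cast
      calc |((k' : ℝ) - k) * ω - (round (k' * ω) - round (k * ω))|
          = |(k' * ω - round (k' * ω)) - (k * ω - round (k * ω))| := by ring_nf
        _ ≤ _ := abs_sub _ _
    have := cfDen_succ_le_of_abs_sub_lt_abs_cfErr hω (Nat.sub_pos_of_lt hkk') _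
      (hsub.trans_lt (by linarith))
    rw [Nat.cast_sub hkk'.le] at this
    linarith

theorem card_cfLevel_eq_mul_cfDen_le (hω : Irrational ω) (n m : ℕ) :
    (#{k ∈ Icc 1 n | cfLevel ω k = m} : ℝ) * cfDen ω m ≤ n := by
  refine Finset.natCast_card_mul_le_of_le_of_add_le (fun k hk => ?_) (fun k hk => ?_)
    (fun k hk k' hk' hkk' => ?_)
  · obtain ⟨hkn, rfl⟩ := mem_filter.1 hk
    exact cfDen_cfLevel_le hω (Nat.one_pos.trans_le (mem_Icc.1 hkn).1)
  · exact (mem_Icc.1 (mem_filter.1 hk).1).2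
  · obtain ⟨-, rfl⟩ := mem_filter.1 hk
    exact add_cfDen_cfLevel_le hω hkk' (mem_filter.1 hk').2.symm

theorem sum_log_inv_four_mul_distToInt_le (hω : Irrational ω)
    (hB : Summable fun m => Real.log (cfDen ω (m + 1)) / cfDen ω m) (n : ℕ) :
    ∑ k ∈ Icc 1 n, Real.log (4 * distToInt (k * ω))⁻¹ ≤
      n * ∑' m, Real.log (cfDen ω (m + 1)) / cfDen ω m := by
  have hterm : ∀ m, 0 ≤ Real.log (cfDen ω (m + 1)) / cfDen ω m := fun m =>
    div_nonneg (Real.log_nonneg (one_le_cfDen hω _)) (cfDen_pos hω m).le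
  rw [← Finset.sum_fiberwise_of_maps_to (g := cfLevel ω) (t := (Icc 1 n).image (cfLevel ω))
    (fun k hk => mem_image_of_mem _ hk)]
  calc ∑ m ∈ (Icc 1 n).image (cfLevel ω), ∑ k ∈ Icc 1 n with cfLevel ω k = m,
        Real.log (4 * distToInt (k * ω))⁻¹
      ≤ ∑ m ∈ (Icc 1 n).image (cfLevel ω), ∑ k ∈ Icc 1 n with cfLevel ω k = m,
        Real.log (cfDen ω (m + 1)) := by
        refine sum_le_sum fun m _ => sum_le_sum fun k hk => ?_
        obtain ⟨hkn, rfl⟩ := mem_filter.1 hk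
        have hk0 : 0 < k := Nat.one_pos.trans_le (mem_Icc.1 hkn).1
        have hd := (hω.natCast_mul hk0.ne').distToInt_pos
        have := one_div_four_mul_cfDen_le_distToInt hω hk0
        refine Real.log_le_log (by positivity) ?_
        rw [div_le_iff₀ (by linarith [cfDen_pos hω (cfLevel ω k + 1)])] at this
        rw [inv_le_iff_one_le_mul₀ (by positivity)]
        linarith
    _ ≤ ∑ m ∈ (Icc 1 n).image (cfLevel ω), n * (Real.log (cfDen ω (m + 1)) / cfDen ω m) := by
        refine sum_le_sum fun m _ => ?_
        rw [sum_const, nsmul_eq_mul, mul_div, le_div_iff₀ (cfDen_pos hω m), mul_right_comm]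
        exact mul_le_mul_of_nonneg_right (card_cfLevel_eq_mul_cfDen_le hω n m)
          (Real.log_nonneg (one_le_cfDen hω _))
    _ ≤ n * ∑' m, Real.log (cfDen ω (m + 1)) / cfDen ω m := by
        rw [← mul_sum]
        exact mul_le_mul_of_nonneg_left (hB.sum_le_tsum _ fun m _ => hterm m) n.cast_nonneg

theorem prod_four_mul_distToInt_le_norm_qPoch (ω : ℝ) (n : ℕ) :
    ∏ k ∈ Icc 1 n, 4 * distToInt (k * ω) ≤
      ‖qPoch (Complex.exp (2 * Real.pi * Complex.I * ω))
        (Complex.exp (2 * Real.pi * Complex.I * ω)) n‖ := by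
  calc ∏ k ∈ Icc 1 n, 4 * distToInt (k * ω)
      = ∏ k ∈ range n, 4 * distToInt ((k + 1 : ℕ) * ω) := by
        rw [range_eq_Ico, prod_Ico_add' (fun k : ℕ => 4 * distToInt (k * ω)) 0 n 1, zero_add,
          Ico_add_one_right_eq_Icc]
    _ ≤ _ := by
        rw [qPoch, norm_prod]
        refine prod_le_prod (fun k _ => by unfold distToInt; positivity) fun k _ =>
          (four_mul_distToInt_le_norm_one_sub_exp _).trans_eq ?_
        rw [← pow_succ, ← Complex.exp_nat_mul]
        push_cast
        ring_nf

theorem norm_inv_qPoch_le_exp (hω : Irrational ω)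
    (hB : Summable fun m => Real.log (cfDen ω (m + 1)) / cfDen ω m) (n : ℕ) :
    ‖(qPoch (Complex.exp (2 * Real.pi * Complex.I * ω))
        (Complex.exp (2 * Real.pi * Complex.I * ω)) n)⁻¹‖ ≤
      Real.exp (n * ∑' m, Real.log (cfDen ω (m + 1)) / cfDen ω m) := by
  have hpos : ∀ k ∈ Icc 1 n, 0 < 4 * distToInt (k * ω) := fun k hk =>
    mul_pos four_pos (hω.natCast_mul (Nat.one_pos.trans_le (mem_Icc.1 hk).1).ne').distToInt_pos
  calc _ ≤ (∏ k ∈ Icc 1 n, 4 * distToInt (k * ω))⁻¹ := by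
        rw [norm_inv]
        exact inv_anti₀ (prod_pos hpos) (prod_four_mul_distToInt_le_norm_qPoch ω n)
    _ = Real.exp (∑ k ∈ Icc 1 n, Real.log (4 * distToInt (k * ω))⁻¹) := by
        rw [Real.exp_sum, ← prod_inv_distrib]
        exact prod_congr rfl fun k hk => (Real.exp_log (inv_pos.2 (hpos k hk))).symm
    _ ≤ _ := Real.exp_le_exp.2 (sum_log_inv_four_mul_distToInt_le hω hB n)

end Irrational

theorem stmt12 :
    ∃ C₀ : ℝ, 0 < C₀ ∧
      ∀ ω : ℝ, ω ∈ Set.Ioo (0 : ℝ) 1 → Irrational ω →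
        Summable (fun n : ℕ => Real.log (cfDen ω (n + 1)) / cfDen ω n) →
        ENNReal.ofReal
            (Real.exp (-(∑' n : ℕ, Real.log (cfDen ω (n + 1)) / cfDen ω n) - C₀)) ≤
          radiusOfConv
            (fun n =>
              (qPoch (Complex.exp (2 * Real.pi * Complex.I * ω))
                  (Complex.exp (2 * Real.pi * Complex.I * ω)) n)⁻¹) := by
  refine ⟨1, one_pos, fun ω _ hω hB => ?_⟩
  set B := ∑' n : ℕ, Real.log (cfDen ω (n + 1)) / cfDen ω n
  refine (ENNReal.ofReal_le_ofReal (Real.exp_le_exp.2 (by linarith : -B - 1 ≤ -B))).trans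
    (le_radiusOfConv_of_norm_mul_pow_le_s12 (Real.exp_pos _).le (C := 1) fun n => ?_)
  calc _ ≤ Real.exp (n * B) * Real.exp (-B) ^ n := by
        gcongr; exact norm_inv_qPoch_le_exp hω hB n
    _ = 1 := by rw [← Real.exp_nat_mul, ← Real.exp_add]; simp
end

section
/- Let q ∈ ℂ with |q| = 1, ν ≥ 1, and let a_0,…,a_ν ∈ ℂ[[x]], a_i(x) = Σ_{n≥0} a_{i,n} x^n, each with positive radius of convergence. Define F_l(T) = Σ_{i=0}^ν a_{i,l} T^i and assume: F_0(1) = 0; F_0(q^n) ≠ 0 for every integer n ≥ 1; and the power series Σ_{n≥1} x^n/(F_0(q)·F_0(q²)···F_0(q^n)) has positive radius of convergence. Then there exists a unique formal power series y ∈ ℂ[[x]] with constant term 1 satisfying Σ_{i=0}^ν a_i(x)·y(q^i x) = 0, and this y has positive radius of convergence. -/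
/-!
Comparing coefficients of `x ^ n` turns the equation into the lower triangular system
`F_0(q^n) y_n = -∑_{m<n} F_{n-m}(q^m) y_m`, which has exactly one solution with `y_0 = 1` because
`F_0(1) = 0` and `F_0(q^n) ≠ 0` for `n ≥ 1`. Since `|q| = 1` and the `a_i` converge, there is
`b ≥ 1` with `|F_l(q^m)| ≤ b^(l+1)`, and strong induction shows that
`u_n = F_0(q) ⋯ F_0(q^n) y_n` satisfies `|u_n| ≤ (2b²)^n`. So
`|y_n| ≤ (2b²)^n / |F_0(q) ⋯ F_0(q^n)|`, and the convergence of the small-divisor series gives `y`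
a positive radius.
-/

open scoped BigOperators

open Finset

/-- The solution with `y 0 = 1` of the system `∑ m ∈ range (n + 1), G (n - m) m * y m = 0`
(`n ≥ 1`), whose diagonal coefficients are `G 0 n`. -/
noncomputable def triangularSolution {K : Type*} [Field K] (G : ℕ → ℕ → K) : ℕ → K
  | 0 => 1
  | n + 1 => -(G 0 (n + 1))⁻¹ * ∑ m : Fin (n + 1), G (n + 1 - m) m * triangularSolution G m

section Triangular

variable {K : Type*} [Field K] {G : ℕ → ℕ → K}

@[simp]
theorem triangularSolution_zero (G : ℕ → ℕ → K) : triangularSolution G 0 = 1 := by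
  rw [triangularSolution]

theorem triangularSolution_succ (G : ℕ → ℕ → K) (n : ℕ) :
    triangularSolution G (n + 1) =
      -(G 0 (n + 1))⁻¹ * ∑ m ∈ range (n + 1), G (n + 1 - m) m * triangularSolution G m := by
  rw [triangularSolution,
    Fin.sum_univ_eq_sum_range (fun m => G (n + 1 - m) m * triangularSolution G m)]

theorem sum_range_succ_succ_eq_zero_iff {n : ℕ} (hn : G 0 (n + 1) ≠ 0) (c : ℕ → K) :
    ∑ m ∈ range (n + 2), G (n + 1 - m) m * c m = 0 ↔
      c (n + 1) = -(G 0 (n + 1))⁻¹ * ∑ m ∈ range (n + 1), G (n + 1 - m) m * c m := by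
  have h : c (n + 1) + (G 0 (n + 1))⁻¹ * ∑ m ∈ range (n + 1), G (n + 1 - m) m * c m =
      (G 0 (n + 1))⁻¹ *
        (∑ m ∈ range (n + 1), G (n + 1 - m) m * c m + G 0 (n + 1) * c (n + 1)) := by
    field_simp
    ring
  rw [sum_range_succ, Nat.sub_self, neg_mul, eq_neg_iff_add_eq_zero, h, mul_eq_zero,
    inv_eq_zero, or_iff_right hn]

theorem sum_triangularSolution_eq_zero (hG₀ : G 0 0 = 0) (hG : ∀ n, G 0 (n + 1) ≠ 0) (n : ℕ) :
    ∑ m ∈ range (n + 1), G (n - m) m * triangularSolution G m = 0 := by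
  cases n with
  | zero => simp [hG₀]
  | succ n => exact (sum_range_succ_succ_eq_zero_iff (hG n) _).2 (triangularSolution_succ G n)

theorem eq_triangularSolution (hG : ∀ n, G 0 (n + 1) ≠ 0) {c : ℕ → K} (hc₀ : c 0 = 1)
    (hc : ∀ n, ∑ m ∈ range (n + 1), G (n - m) m * c m = 0) : c = triangularSolution G := by
  funext n
  induction n using Nat.strong_induction_on with
  | _ n ih =>
    cases n with
    | zero => simp [hc₀]
    | succ n =>
      rw [(sum_range_succ_succ_eq_zero_iff (hG n) c).1 (hc (n + 1)), triangularSolution_succ]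
      refine congrArg _ (sum_congr rfl fun m hm => ?_)
      rw [ih m (mem_range.1 hm)]

end Triangular

section Bounds

variable {K : Type*} [NormedField K] {G : ℕ → ℕ → K}

theorem prod_mul_triangularSolution_succ {n : ℕ} (hn : G 0 (n + 1) ≠ 0) :
    (∏ k ∈ range (n + 1), G 0 (k + 1)) * triangularSolution G (n + 1) =
      -∑ m ∈ range (n + 1), G (n + 1 - m) m * ((∏ k ∈ Ico m n, G 0 (k + 1)) *
        ((∏ k ∈ range m, G 0 (k + 1)) * triangularSolution G m)) := by
  rw [triangularSolution_succ, prod_range_succ, mul_sum, ← sum_neg_distrib, mul_sum]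
  refine sum_congr rfl fun m hm => ?_
  rw [← prod_range_mul_prod_Ico _ (Nat.le_of_lt_succ (mem_range.1 hm))]
  field_simp

theorem norm_prod_mul_triangularSolution_le (hG : ∀ n, G 0 (n + 1) ≠ 0) {b : ℝ}
    (hGb : ∀ l m, ‖G l m‖ ≤ b ^ (l + 1)) (n : ℕ) :
    ‖(∏ k ∈ range n, G 0 (k + 1)) * triangularSolution G n‖ ≤ (2 * b ^ 2) ^ n := by
  have hb : 0 ≤ b := by simpa using (norm_nonneg _).trans (hGb 0 0)
  induction n using Nat.strong_induction_on with
  | _ n ih =>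
    cases n with
    | zero => simp
    | succ n =>
      have hterm : ∀ m ∈ range (n + 1), ‖G (n + 1 - m) m * ((∏ k ∈ Ico m n, G 0 (k + 1)) *
          ((∏ k ∈ range m, G 0 (k + 1)) * triangularSolution G m))‖ ≤
            2 ^ m * (b ^ 2) ^ (n + 1) := by
        intro m hm
        have hmn : m ≤ n := Nat.le_of_lt_succ (mem_range.1 hm)
        have hIco : ‖∏ k ∈ Ico m n, G 0 (k + 1)‖ ≤ b ^ (n - m) := by
          rw [norm_prod, ← Nat.card_Ico m n, ← prod_const]
          exact prod_le_prod (fun _ _ => norm_nonneg _) fun k _ => by simpa using hGb 0 (k + 1)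
        calc _ ≤ b ^ (n + 1 - m + 1) * (b ^ (n - m) * (2 * b ^ 2) ^ m) := by
              rw [norm_mul, norm_mul]
              gcongr
              · exact hGb _ _
              · exact ih m (by omega)
          _ = 2 ^ m * (b ^ 2) ^ (n + 1) := by
              rw [mul_pow, ← pow_mul, ← pow_mul,
                show 2 * (n + 1) = (n + 1 - m + 1) + (2 * m + (n - m)) by omega, pow_add, pow_add]
              ring
      calc _ = ‖∑ m ∈ range (n + 1), G (n + 1 - m) m * ((∏ k ∈ Ico m n, G 0 (k + 1)) *
              ((∏ k ∈ range m, G 0 (k + 1)) * triangularSolution G m))‖ := by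
            rw [prod_mul_triangularSolution_succ (hG n), norm_neg]
        _ ≤ ∑ m ∈ range (n + 1), 2 ^ m * (b ^ 2) ^ (n + 1) := norm_sum_le_of_le _ hterm
        _ ≤ 2 ^ (n + 1) * (b ^ 2) ^ (n + 1) := by
            rw [← sum_mul]
            gcongr
            rw [geom_sum_eq (by norm_num : (2 : ℝ) ≠ 1)]
            norm_num
        _ = (2 * b ^ 2) ^ (n + 1) := (mul_pow _ _ _).symm

theorem norm_triangularSolution_le (hG : ∀ n, G 0 (n + 1) ≠ 0) {b : ℝ}
    (hGb : ∀ l m, ‖G l m‖ ≤ b ^ (l + 1)) (n : ℕ) :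
    ‖triangularSolution G n‖ ≤ (2 * b ^ 2) ^ n * ‖(∏ k ∈ range n, G 0 (k + 1))⁻¹‖ := by
  have hP : ∏ k ∈ range n, G 0 (k + 1) ≠ 0 := prod_ne_zero_iff.2 fun k _ => hG k
  rw [← inv_mul_cancel_left₀ hP (triangularSolution G n), norm_mul _ (_ * _), mul_comm]
  gcongr
  exact norm_prod_mul_triangularSolution_le hG hGb n

end Bounds

theorem coeff_sum_mul_rescale_pow {R : Type*} [CommRing R] {d : ℕ}
    (a : Fin (d + 1) → PowerSeries R) (q : R) (z : PowerSeries R) (n : ℕ) :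
    PowerSeries.coeff n (∑ i : Fin (d + 1), a i * PowerSeries.rescale (q ^ (i : ℕ)) z) =
      ∑ m ∈ range (n + 1),
        (∑ i : Fin (d + 1), PowerSeries.coeff (n - m) (a i) * (q ^ m) ^ (i : ℕ)) *
          PowerSeries.coeff m z := by
  simp only [map_sum, mul_comm (a _), PowerSeries.coeff_mul,
    Nat.sum_antidiagonal_eq_sum_range_succ_mk, PowerSeries.coeff_rescale, sum_mul]
  rw [sum_comm]
  refine sum_congr rfl fun m _ => sum_congr rfl fun i _ => ?_
  rw [pow_right_comm]
  ring

theorem norm_sum_mul_pow_le {𝕜 : Type*} [NormedField 𝕜] {d : ℕ} {c : Fin (d + 1) → ℕ → 𝕜}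
    {b : ℝ} (hb : 1 ≤ b) (hc : ∀ i n, ‖c i n‖ ≤ b ^ (n + 1)) {T : 𝕜} (hT : ‖T‖ ≤ 1) (l : ℕ) :
    ‖∑ i : Fin (d + 1), c i l * T ^ (i : ℕ)‖ ≤ ((d + 1) * b) ^ (l + 1) :=
  calc _ ≤ ∑ _i : Fin (d + 1), b ^ (l + 1) := norm_sum_le_of_le _ fun i _ => by
        rw [norm_mul, norm_pow]
        exact (mul_le_of_le_one_right (norm_nonneg _) (pow_le_one₀ (norm_nonneg _) hT)).trans
          (hc i l)
    _ = (d + 1) * b ^ (l + 1) := by simp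
    _ ≤ (d + 1) ^ (l + 1) * b ^ (l + 1) := by
        gcongr
        exact le_self_pow₀ (by linarith [(d.cast_nonneg : (0 : ℝ) ≤ d)]) l.succ_ne_zero
    _ = ((d + 1) * b) ^ (l + 1) := (mul_pow _ _ _).symm

theorem radiusOfConv_pos_iff (c : ℕ → ℂ) :
    0 < radiusOfConv c ↔ ∃ r : NNReal, 0 < r ∧ ∃ C : ℝ, ∀ n, ‖c n‖ * (r : ℝ) ^ n ≤ C := by
  simp only [radiusOfConv, lt_iSup_iff, ENNReal.coe_pos, exists_prop]
  constructor
  · rintro ⟨r, C, hC, hr⟩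
    exact ⟨r, hr, C, hC⟩
  · rintro ⟨r, hr, C, hC⟩
    exact ⟨r, C, hC, hr⟩

theorem exists_norm_le_pow_of_radiusOfConv_pos {c : ℕ → ℂ} (h : 0 < radiusOfConv c) :
    ∃ b : ℝ, 1 ≤ b ∧ ∀ n, ‖c n‖ ≤ b ^ (n + 1) := by
  obtain ⟨r, hr, C, hC⟩ := (radiusOfConv_pos_iff c).1 h
  have hr' : (0 : ℝ) < r := hr
  refine ⟨max 1 (max C (r : ℝ)⁻¹), le_max_left _ _, fun n => ?_⟩
  calc ‖c n‖ ≤ C * ((r : ℝ)⁻¹) ^ n := by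
        rw [inv_pow, ← div_eq_mul_inv, le_div_iff₀ (by positivity)]
        exact hC n
    _ ≤ max 1 (max C (r : ℝ)⁻¹) * max 1 (max C (r : ℝ)⁻¹) ^ n := by
        gcongr
        · exact le_max_of_le_right (le_max_left _ _)
        · exact le_max_of_le_right (le_max_right _ _)
    _ = _ := (pow_succ' _ _).symm

theorem exists_forall_norm_le_pow_of_radiusOfConv_pos {ι : Type*} [Fintype ι] {c : ι → ℕ → ℂ}
    (h : ∀ i, 0 < radiusOfConv (c i)) : ∃ b : ℝ, 1 ≤ b ∧ ∀ i n, ‖c i n‖ ≤ b ^ (n + 1) := by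
  choose b hb₁ hb using fun i => exists_norm_le_pow_of_radiusOfConv_pos (h i)
  have hb₀ : ∀ i, 0 ≤ b i := fun i => zero_le_one.trans (hb₁ i)
  refine ⟨1 + ∑ i, b i, by linarith [sum_nonneg fun i (_ : i ∈ univ) => hb₀ i], fun i n => ?_⟩
  refine (hb i n).trans (pow_le_pow_left₀ (hb₀ i) ?_ _)
  linarith [single_le_sum (fun j (_ : j ∈ univ) => hb₀ j) (mem_univ i)]

theorem radiusOfConv_pos_of_norm_le {c d : ℕ → ℂ} {K : ℝ} (hK : 0 < K)
    (h : ∀ n, 1 ≤ n → ‖c n‖ ≤ K ^ n * ‖d n‖) (hd : 0 < radiusOfConv d) :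
    0 < radiusOfConv c := by
  obtain ⟨s, hs, D, hD⟩ := (radiusOfConv_pos_iff d).1 hd
  refine (radiusOfConv_pos_iff c).2
    ⟨(s / K).toNNReal, Real.toNNReal_pos.2 (by positivity), max ‖c 0‖ D, fun n => ?_⟩
  rw [Real.coe_toNNReal _ (by positivity)]
  rcases n with _ | n
  · simp
  calc ‖c (n + 1)‖ * (s / K) ^ (n + 1) ≤ K ^ (n + 1) * ‖d (n + 1)‖ * (s / K) ^ (n + 1) := by
        gcongr
        exact h _ n.succ_pos
    _ = ‖d (n + 1)‖ * s ^ (n + 1) := by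
        rw [mul_right_comm, ← mul_pow, mul_div_cancel₀ _ hK.ne', mul_comm]
    _ ≤ max ‖c 0‖ D := le_max_of_le_right (hD _)

theorem stmt14_general (q : ℂ) (hq : ‖q‖ = 1) (ν : ℕ)
    (a : Fin (ν + 1) → PowerSeries ℂ)
    (ha : ∀ i, 0 < radiusOfConv (fun n => PowerSeries.coeff n (a i)))
    (F : ℕ → ℂ → ℂ)
    (hF : F = fun l T => ∑ i : Fin (ν + 1), PowerSeries.coeff l (a i) * T ^ (i : ℕ))
    (hF1 : F 0 1 = 0)
    (hFn : ∀ n : ℕ, 1 ≤ n → F 0 (q ^ n) ≠ 0)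
    (hconv :
      0 < radiusOfConv
          (fun n => if n = 0 then 0 else (∏ k ∈ Finset.range n, F 0 (q ^ (k + 1)))⁻¹)) :
    ∃ y : PowerSeries ℂ,
      (PowerSeries.constantCoeff y = 1 ∧
          (∑ i : Fin (ν + 1), a i * PowerSeries.rescale (q ^ (i : ℕ)) y = 0) ∧
          0 < radiusOfConv (fun n => PowerSeries.coeff n y)) ∧
        ∀ z : PowerSeries ℂ, PowerSeries.constantCoeff z = 1 →
          (∑ i : Fin (ν + 1), a i * PowerSeries.rescale (q ^ (i : ℕ)) z = 0) → z = y := by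
  set G : ℕ → ℕ → ℂ := fun l m => F l (q ^ m) with hG_def
  have hG : ∀ n, G 0 (n + 1) ≠ 0 := fun n => hFn (n + 1) n.succ_pos
  have hsol : ∀ z : PowerSeries ℂ,
      ∑ i : Fin (ν + 1), a i * PowerSeries.rescale (q ^ (i : ℕ)) z = 0 ↔
        ∀ n, ∑ m ∈ range (n + 1), G (n - m) m * PowerSeries.coeff m z = 0 := by
    intro z
    simp only [PowerSeries.ext_iff, coeff_sum_mul_rescale_pow, map_zero, hG_def, hF]
  refine ⟨PowerSeries.mk (triangularSolution G), ⟨by simp, (hsol _).2 ?_, ?_⟩, fun z hz₀ hz => ?_⟩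
  · simpa using sum_triangularSolution_eq_zero (by simpa [hG_def] using hF1) hG
  · obtain ⟨b, hb, hab⟩ := exists_forall_norm_le_pow_of_radiusOfConv_pos ha
    have hGb : ∀ l m, ‖G l m‖ ≤ ((ν + 1) * b) ^ (l + 1) := fun l m => by
      simpa [hG_def, hF] using norm_sum_mul_pow_le hb hab (by simp [hq] : ‖q ^ m‖ ≤ 1) l
    have hK : 0 < 2 * ((ν + 1) * b) ^ 2 := by positivity
    refine radiusOfConv_pos_of_norm_le hK (fun n hn => ?_) hconv
    simp only [PowerSeries.coeff_mk, if_neg (Nat.one_le_iff_ne_zero.1 hn)]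
    exact norm_triangularSolution_le hG hGb n
  · have hc := eq_triangularSolution hG (c := fun n => PowerSeries.coeff n z) (by simpa using hz₀)
      ((hsol z).1 hz)
    ext n
    simpa using congrFun hc n

theorem stmt14 (q : ℂ) (hq : ‖q‖ = 1) (ν : ℕ) (hν : 1 ≤ ν)
    (a : Fin (ν + 1) → PowerSeries ℂ)
    (ha : ∀ i, 0 < radiusOfConv (fun n => PowerSeries.coeff n (a i)))
    (F : ℕ → ℂ → ℂ)
    (hF : F = fun l T => ∑ i : Fin (ν + 1), PowerSeries.coeff l (a i) * T ^ (i : ℕ))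
    (hF1 : F 0 1 = 0)
    (hFn : ∀ n : ℕ, 1 ≤ n → F 0 (q ^ n) ≠ 0)
    (hconv :
      0 < radiusOfConv
          (fun n => if n = 0 then 0 else (∏ k ∈ Finset.range n, F 0 (q ^ (k + 1)))⁻¹)) :
    ∃ y : PowerSeries ℂ,
      (PowerSeries.constantCoeff y = 1 ∧
          (∑ i : Fin (ν + 1), a i * PowerSeries.rescale (q ^ (i : ℕ)) y = 0) ∧
          0 < radiusOfConv (fun n => PowerSeries.coeff n y)) ∧
        ∀ z : PowerSeries ℂ, PowerSeries.constantCoeff z = 1 →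
          (∑ i : Fin (ν + 1), a i * PowerSeries.rescale (q ^ (i : ℕ)) z = 0) → z = y :=
  stmt14_general q hq ν a ha F hF hF1 hFn hconv
end

section
/- Let q ∈ ℂ*, not a root of unity, let μ, μ' ∈ ℤ and λ, λ' ∈ ℂ*. There exists a nonzero formal Laurent series g = Σ_{n} g_n x^n over ℂ (coefficients supported on a subset of ℤ bounded below) such that λ'·x^μ·g(qx) = λ·x^{μ'}·g(x), i.e., such that for every n ∈ ℤ one has λ'·q^{n−μ}·g_{n−μ} = λ·g_{n−μ'}, if and only if μ = μ' and λ/λ' ∈ q^ℤ = {q^k : k ∈ ℤ}. -/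
/-!
Compare the equation at the lowest index `m` where `g` does not vanish. If `μ ≠ μ'`, the side
shifted further down vanishes there while the other does not, so `μ = μ'`; the equation at `m`
then reads `lam' * q ^ m = lam`. Conversely, if `lam = lam' * q ^ k`, the monomial `x ^ k`
is a solution.
-/

theorem Int.exists_least_ne_zero {M : Type*} [Zero M] {g : ℤ → M}
    (hbdd : ∃ N : ℤ, ∀ n < N, g n = 0) (hg : g ≠ 0) :
    ∃ m, g m ≠ 0 ∧ ∀ n < m, g n = 0 := by
  obtain ⟨N, hN⟩ := hbdd
  obtain ⟨m, hm, hmin⟩ := Int.exists_least_of_bdd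
    (P := fun n => g n ≠ 0) ⟨N, fun n hn => not_lt.mp (mt (hN n) hn)⟩
    (Function.ne_iff.mp hg)
  exact ⟨m, hm, fun n hn => not_not.mp (mt (hmin n) (not_le.mpr hn))⟩

section QDifference

variable {K : Type*} [CommGroupWithZero K] {q lam lam' : K} {μ μ' m : ℤ} {g : ℤ → K}

theorem shift_eq_of_forall_mul_zpow_eq (hq : q ≠ 0) (hlam : lam ≠ 0) (hlam' : lam' ≠ 0)
    (hm : g m ≠ 0) (hlt : ∀ n < m, g n = 0)
    (hrec : ∀ n, lam' * q ^ (n - μ) * g (n - μ) = lam * g (n - μ')) : μ = μ' := by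
  rcases lt_trichotomy μ μ' with h | h | h
  · have hm' := hrec (m + μ)
    rw [add_sub_cancel_right, hlt (m + μ - μ') (by omega), mul_zero] at hm'
    exact absurd hm' (mul_ne_zero (mul_ne_zero hlam' (zpow_ne_zero _ hq)) hm)
  · exact h
  · have hm' := hrec (m + μ')
    rw [add_sub_cancel_right, hlt (m + μ' - μ) (by omega), mul_zero] at hm'
    exact absurd hm'.symm (mul_ne_zero hlam hm)

theorem div_eq_zpow_of_forall_mul_zpow_eq (hlam' : lam' ≠ 0) (hm : g m ≠ 0)
    (hrec : ∀ n, lam' * q ^ (n - μ) * g (n - μ) = lam * g (n - μ)) :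
    lam / lam' = q ^ m := by
  have hm' := hrec (m + μ)
  rw [add_sub_cancel_right] at hm'
  rw [← mul_right_cancel₀ hm hm', mul_div_cancel_left₀ _ hlam']

theorem mul_zpow_mul_single_eq {k : ℤ} (hk : lam / lam' = q ^ k) (hlam' : lam' ≠ 0) (n : ℤ) :
    lam' * q ^ n * (Pi.single k 1 : ℤ → K) n = lam * (Pi.single k 1 : ℤ → K) n := by
  rw [div_eq_iff hlam'] at hk
  by_cases h : n = k
  · rw [h, hk, mul_comm (q ^ k)]
  · simp only [Pi.single_apply, if_neg h, mul_zero]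

end QDifference

theorem stmt17_general (q : ℂ) (hq0 : q ≠ 0)
    (μ μ' : ℤ) (lam lam' : ℂ) (hlam : lam ≠ 0) (hlam' : lam' ≠ 0) :
    (∃ g : ℤ → ℂ,
        (∃ N : ℤ, ∀ n : ℤ, n < N → g n = 0) ∧ g ≠ 0 ∧
          ∀ n : ℤ, lam' * q ^ (n - μ) * g (n - μ) = lam * g (n - μ')) ↔
      (μ = μ' ∧ ∃ k : ℤ, lam / lam' = q ^ k) := by
  constructor
  · rintro ⟨g, hbdd, hg, hrec⟩
    obtain ⟨m, hm, hlt⟩ := Int.exists_least_ne_zero hbdd hg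
    obtain rfl := shift_eq_of_forall_mul_zpow_eq hq0 hlam hlam' hm hlt hrec
    exact ⟨rfl, m, div_eq_zpow_of_forall_mul_zpow_eq hlam' hm hrec⟩
  · rintro ⟨rfl, k, hk⟩
    refine ⟨Pi.single k 1, ⟨k, fun n hn => Pi.single_eq_of_ne hn.ne _⟩, ?_,
      fun n => mul_zpow_mul_single_eq hk hlam' (n - μ)⟩
    exact Function.ne_iff.mpr ⟨k, by simp⟩

theorem stmt17 (q : ℂ) (hq0 : q ≠ 0) (hq : ∀ n : ℕ, 1 ≤ n → q ^ n ≠ 1)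
    (μ μ' : ℤ) (lam lam' : ℂ) (hlam : lam ≠ 0) (hlam' : lam' ≠ 0) :
    (∃ g : ℤ → ℂ,
        (∃ N : ℤ, ∀ n : ℤ, n < N → g n = 0) ∧ g ≠ 0 ∧
          ∀ n : ℤ, lam' * q ^ (n - μ) * g (n - μ) = lam * g (n - μ')) ↔
      (μ = μ' ∧ ∃ k : ℤ, lam / lam' = q ^ k) :=
  stmt17_general q hq0 μ μ' lam lam' hlam hlam'
end
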